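/- Let m ≥ 1 and let J be a finite set of jobs that is feasible on m machines but not feasible on m − 1 machines. Then there exists a nonempty finite set I ⊆ ℤ such that C(J, I) > (m − 1)·|I|; equivalently, ⌈C(J, I)/|I|⌉ = m for this I. (This is the hard direction of Theorem 1, the characterization of the optimum number of machines.) -/

import Mathlib

/-- A job given by integer release date `r`, deadline `d`, and processing time `p`. -/
structure Job where
  r : ℤ
  d : ℤ
  p : ℤ
deriving DecidableEq

/-- A job is valid if `1 ≤ p` and `r + p ≤ d`. -/
def Job.valid (j : Job) : Prop := 1 ≤ j.p ∧ j.r + j.p ≤ j.d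

/-- The interval `I(j) = {t ∈ ℤ : r ≤ t < d}` of a job. -/
noncomputable def Job.interval (j : Job) : Finset ℤ := Finset.Ico j.r j.d

/-- The laxity `ℓ_j = d - r - p` of a job. -/
def Job.lax (j : Job) : ℤ := j.d - j.r - j.p

/-- The contribution `C(j, I) = max {0, |I ∩ I(j)| - ℓ_j}` of a job to a finite set `I ⊆ ℤ`. -/
noncomputable def contribution (j : Job) (I : Finset ℤ) : ℤ :=
  max 0 (((I ∩ j.interval).card : ℤ) - j.lax)

/-- A finite set of jobs `J` is feasible on `m` machines. -/
def Feasible (J : Finset Job) (m : ℕ) : Prop :=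
  ∃ σ : ℤ → Finset Job,
    (∀ t, σ t ⊆ J) ∧
    (∀ t, (σ t).card ≤ m) ∧
    (∀ t, ∀ j ∈ σ t, j.r ≤ t ∧ t < j.d) ∧
    (∀ j ∈ J, ((Finset.Ico j.r j.d).filter (fun t => j ∈ σ t)).card = j.p.toNat)

/-!
Feasibility is a bipartite matching problem. Match every pair `(j, t)` with `t ∈ I(j)` either
to one of the `m` machines at time `t` or to one of `ℓ_j` idle units of `j`: as at most `ℓ_j`
pairs of `j` are idle, `j` runs at least `|I(j)| - ℓ_j = p_j` times, and the surplus can be dropped.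
For a set `S` of pairs with set of times `I`, Hall's condition `|S| ≤ m |I| + ∑ ℓ_j` (over the
jobs occurring in `S`) follows from `C(J, I) ≤ m |I|`, since job `j` occurs in at most
`|I ∩ I(j)| ≤ C(j, I) + ℓ_j` pairs of `S`.
-/

open Finset

lemma Job.valid.lax_nonneg {j : Job} (h : j.valid) : 0 ≤ j.lax := by
  unfold Job.lax; linarith [h.2]

lemma contribution_empty {j : Job} (h : 0 ≤ j.lax) : contribution j ∅ = 0 := by
  simp [contribution, h]

lemma card_inter_interval_le (j : Job) (I : Finset ℤ) :
    (#(I ∩ j.interval) : ℤ) ≤ contribution j I + j.lax := by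
  unfold contribution
  linarith [le_max_right 0 ((#(I ∩ j.interval) : ℤ) - j.lax)]

lemma feasible_of_le_card_filter {J : Finset Job} {m : ℕ} (σ : ℤ → Finset Job)
    (hσJ : ∀ t, σ t ⊆ J) (hσm : ∀ t, #(σ t) ≤ m) (hσ : ∀ t, ∀ j ∈ σ t, j.r ≤ t ∧ t < j.d)
    (hp : ∀ j ∈ J, j.p.toNat ≤ #{t ∈ Ico j.r j.d | j ∈ σ t}) : Feasible J m := by
  classical
  choose T hTsub hTcard using fun j : Job ↦
    exists_subset_card_eq (min_le_right j.p.toNat #{t ∈ Ico j.r j.d | j ∈ σ t})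
  refine ⟨fun t ↦ {j ∈ σ t | t ∈ T j}, fun t ↦ (filter_subset _ _).trans (hσJ t),
    fun t ↦ (card_filter_le _ _).trans (hσm t), fun t j hj ↦ hσ t j (mem_filter.1 hj).1,
    fun j hj ↦ ?_⟩
  have hT : {t ∈ Ico j.r j.d | j ∈ {j ∈ σ t | t ∈ T j}} = T j := by
    ext t
    have := @hTsub j t
    simp only [mem_filter] at this ⊢
    tauto
  rw [hT, hTcard, min_eq_left (hp j hj)]

/-- `inl (t, c)` is machine `c` at time `t`, `inr ⟨j, i⟩` the `i`-th idle unit of job `j`. -/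
abbrev Slot (m : ℕ) := (ℤ × Fin m) ⊕ (Σ _ : Job, ℕ)

def slots (m : ℕ) (x : Job × ℤ) : Finset (Slot m) :=
  ({x.2} ×ˢ univ).disjSum (({x.1} : Finset Job).sigma fun j ↦ range j.lax.toNat)

noncomputable def jobTimes (J : Finset Job) : Finset (Job × ℤ) := J.biUnion fun j ↦ {j} ×ˢ j.interval

lemma mem_jobTimes {J : Finset Job} {x : Job × ℤ} :
    x ∈ jobTimes J ↔ x.1 ∈ J ∧ x.2 ∈ x.1.interval := by
  obtain ⟨j, t⟩ := x
  simp [jobTimes]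

lemma biUnion_slots (m : ℕ) (S : Finset (Job × ℤ)) :
    S.biUnion (slots m) =
      (S.image Prod.snd ×ˢ univ).disjSum ((S.image Prod.fst).sigma fun j ↦ range j.lax.toNat) := by
  ext (⟨t, c⟩ | ⟨j, i⟩) <;> simp [slots]

lemma filter_isLeft_slots (m : ℕ) (x : Job × ℤ) :
    {y ∈ slots m x | y.isLeft} = ({x.2} ×ˢ univ).disjSum ∅ := by
  ext (⟨t, c⟩ | ⟨j, i⟩) <;> simp [slots]

lemma filter_not_isLeft_slots (m : ℕ) (x : Job × ℤ) :
    {y ∈ slots m x | ¬ y.isLeft} = (∅ : Finset (ℤ × Fin m)).disjSum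
      (({x.1} : Finset Job).sigma fun j ↦ range j.lax.toNat) := by
  ext (⟨t, c⟩ | ⟨j, i⟩) <;> simp [slots]

lemma card_biUnion_slots (m : ℕ) (S : Finset (Job × ℤ)) :
    #(S.biUnion (slots m)) = #(S.image Prod.snd) * m + ∑ j ∈ S.image Prod.fst, j.lax.toNat := by
  simp [biUnion_slots, card_sigma]

lemma card_le_card_biUnion_slots {J : Finset Job} {m : ℕ} (hlax : ∀ j ∈ J, 0 ≤ j.lax)
    (hC : ∀ I : Finset ℤ, ∑ j ∈ J, contribution j I ≤ m * #I) {S : Finset (Job × ℤ)}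
    (hS : S ⊆ jobTimes J) : #S ≤ #(S.biUnion (slots m)) := by
  classical
  set T := S.image Prod.snd
  set Js := S.image Prod.fst
  have hJs : Js ⊆ J := by
    intro j hj
    obtain ⟨x, hx, rfl⟩ := mem_image.1 hj
    exact (mem_jobTimes.1 (hS hx)).1
  have hfiber (j : Job) : #{x ∈ S | x.1 = j} ≤ #(T ∩ j.interval) := by
    refine card_le_card_of_injOn Prod.snd (fun x hx ↦ ?_) fun x hx y hy e ↦ ?_
    · obtain ⟨hxS, rfl⟩ := mem_filter.1 hx
      exact mem_inter.2 ⟨mem_image_of_mem _ hxS, (mem_jobTimes.1 (hS hxS)).2⟩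
    · exact Prod.ext ((mem_filter.1 hx).2.trans (mem_filter.1 hy).2.symm) e
  have hS_le : (#S : ℤ) ≤ ∑ j ∈ Js, contribution j T + ∑ j ∈ Js, j.lax := by
    rw [card_eq_sum_card_image Prod.fst S, ← sum_add_distrib]
    push_cast
    exact sum_le_sum fun j _ ↦ (Nat.cast_le.2 (hfiber j)).trans (card_inter_interval_le j T)
  have hC_le : ∑ j ∈ Js, contribution j T ≤ ∑ j ∈ J, contribution j T :=
    sum_le_sum_of_subset_of_nonneg hJs fun _ _ _ ↦ le_max_left _ _
  have hlax_eq : ∑ j ∈ Js, j.lax = ∑ j ∈ Js, (j.lax.toNat : ℤ) :=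
    sum_congr rfl fun j hj ↦ (Int.toNat_of_nonneg (hlax j (hJs hj))).symm
  zify
  rw [card_biUnion_slots]
  push_cast
  linarith [hC T]

lemma exists_injOn_slots {J : Finset Job} {m : ℕ} (hlax : ∀ j ∈ J, 0 ≤ j.lax)
    (hC : ∀ I : Finset ℤ, ∑ j ∈ J, contribution j I ≤ m * #I) :
    ∃ g : Job × ℤ → Slot m, Set.InjOn g (jobTimes J) ∧ ∀ x ∈ jobTimes J, g x ∈ slots m x := by
  classical
  obtain ⟨f, hf, hfx⟩ := (all_card_le_biUnion_card_iff_exists_injective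
    fun x : jobTimes J ↦ slots m x).1 fun s ↦ by
      have hs : s.biUnion (fun x ↦ slots m x) = (s.map (.subtype _)).biUnion (slots m) := by
        ext; simp
      rw [hs, ← card_map (.subtype _)]
      exact card_le_card_biUnion_slots hlax hC fun x hx ↦ by
        obtain ⟨y, -, rfl⟩ := mem_map.1 hx
        exact y.2
  refine ⟨fun x ↦ if h : x ∈ jobTimes J then f ⟨x, h⟩ else .inr ⟨x.1, 0⟩,
    fun x hx y hy e ↦ ?_, fun x hx ↦ ?_⟩
  · simp only [mem_coe] at hx hy
    simp only [hx, hy, dite_true] at e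
    exact congrArg Subtype.val (hf e)
  · simpa [hx] using hfx ⟨x, hx⟩

lemma feasible_of_injOn_slots {J : Finset Job} {m : ℕ} (hJ : ∀ j ∈ J, j.valid)
    (g : Job × ℤ → Slot m) (hinj : Set.InjOn g (jobTimes J))
    (hg : ∀ x ∈ jobTimes J, g x ∈ slots m x) : Feasible J m := by
  classical
  set σ : ℤ → Finset Job := fun t ↦ {j ∈ J | t ∈ j.interval ∧ (g (j, t)).isLeft}
  have hσ (j : Job) (t : ℤ) : j ∈ σ t ↔ (j, t) ∈ jobTimes J ∧ (g (j, t)).isLeft := by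
    simp [σ, mem_jobTimes, and_assoc]
  refine feasible_of_le_card_filter σ (fun t ↦ filter_subset _ _) (fun t ↦ ?_)
    (fun t j hj ↦ ?_) fun j hj ↦ ?_
  · calc #(σ t) ≤ #(({t} ×ˢ (univ : Finset (Fin m))).disjSum (∅ : Finset (Σ _ : Job, ℕ))) := by
          refine card_le_card_of_injOn (fun j ↦ g (j, t)) (fun j hj ↦ ?_)
            fun j₁ h₁ j₂ h₂ e ↦ congrArg Prod.fst (hinj ((hσ _ _).1 h₁).1 ((hσ _ _).1 h₂).1 e)
          obtain ⟨hjt, hl⟩ := (hσ j t).1 hj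
          rw [← filter_isLeft_slots m (j, t)]
          exact mem_filter.2 ⟨hg _ hjt, hl⟩
      _ = m := by simp
  · simpa [Job.interval] using (mem_jobTimes.1 ((hσ j t).1 hj).1).2
  · have hmem (t : ℤ) (ht : t ∈ Ico j.r j.d) : (j, t) ∈ jobTimes J := mem_jobTimes.2 ⟨hj, ht⟩
    have hidle : #{t ∈ Ico j.r j.d | j ∉ σ t} ≤ j.lax.toNat := by
      calc _ ≤ #((∅ : Finset (ℤ × Fin m)).disjSum
            (({j} : Finset Job).sigma fun j ↦ range j.lax.toNat)) := by
            refine card_le_card_of_injOn (fun t ↦ g (j, t)) (fun t ht ↦ ?_)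
              fun t₁ h₁ t₂ h₂ e ↦ congrArg Prod.snd
                (hinj (hmem _ (mem_filter.1 h₁).1) (hmem _ (mem_filter.1 h₂).1) e)
            obtain ⟨ht, hnot⟩ := mem_filter.1 ht
            rw [← filter_not_isLeft_slots m (j, t)]
            exact mem_filter.2 ⟨hg _ (hmem t ht), fun hl ↦ hnot ((hσ j t).2 ⟨hmem t ht, hl⟩)⟩
        _ = j.lax.toNat := by simp
    have hsplit := card_filter_add_card_filter_not (s := Ico j.r j.d) (fun t ↦ j ∈ σ t)
    rw [Int.card_Ico] at hsplit
    have := hJ j hj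
    unfold Job.valid at this
    unfold Job.lax at hidle
    omega

theorem feasible_of_sum_contribution_le {J : Finset Job} (hJ : ∀ j ∈ J, j.valid) {m : ℕ}
    (hC : ∀ I : Finset ℤ, I.Nonempty → ∑ j ∈ J, contribution j I ≤ m * #I) : Feasible J m := by
  have hlax (j : Job) (hj : j ∈ J) : 0 ≤ j.lax := (hJ j hj).lax_nonneg
  have hC' (I : Finset ℤ) : ∑ j ∈ J, contribution j I ≤ m * #I := by
    rcases I.eq_empty_or_nonempty with rfl | hI
    · simp [sum_eq_zero fun j hj ↦ contribution_empty (hlax j hj)]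
    · exact hC I hI
  obtain ⟨g, hinj, hg⟩ := exists_injOn_slots hlax hC'
  exact feasible_of_injOn_slots hJ g hinj hg

theorem exists_dense_interval_of_optimal_general
    (J : Finset Job) (hJ : ∀ j ∈ J, j.valid) (m : ℕ) (hm : 1 ≤ m)
    (hinfeas : ¬ Feasible J (m - 1)) :
    ∃ I : Finset ℤ, I.Nonempty ∧
      ((m : ℤ) - 1) * I.card < ∑ j ∈ J, contribution j I := by
  by_contra! hdense
  refine hinfeas (feasible_of_sum_contribution_le hJ fun I hI ↦ ?_)
  rw [Nat.cast_sub hm, Nat.cast_one]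
  exact hdense I hI

/-- If `J` is feasible on `m ≥ 1` machines but not on `m - 1` machines,
then there is a nonempty finite `I ⊆ ℤ` with `C(J, I) > (m - 1)·|I|`. -/
theorem exists_dense_interval_of_optimal
    (J : Finset Job) (hJ : ∀ j ∈ J, j.valid) (m : ℕ) (hm : 1 ≤ m)
    (hfeas : Feasible J m) (hinfeas : ¬ Feasible J (m - 1)) :
    ∃ I : Finset ℤ, I.Nonempty ∧
      ((m : ℤ) - 1) * I.card < ∑ j ∈ J, contribution j I :=
  exists_dense_interval_of_optimal_general J hJ m hm hinfeas
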